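/- For any ρ ∈ S^+ and any orthonormal basis {|j⟩}_{j=1}^{2^N} of (ℂ²)^{⊗N}, the average over the 6^{n(ρ)} states |ψ⟩ ∈ S_ρ of Σ_{j=1}^{2^N} |⟨j|ψ⟩|⁴ is at most (2/3)^{n(ρ)}, i.e., (1/|S_ρ|) Σ_{|ψ⟩∈S_ρ} 1/D^eff_ψ ≤ (2/3)^{n(ρ)}. -/

import Mathlib

open scoped Matrix ComplexConjugate

/-- The six single-qubit states `|x^±⟩, |y^±⟩, |z^±⟩`: unit eigenvectors of the Pauli
matrices `σˣ, σʸ, σᶻ` with eigenvalues `±1`. -/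
noncomputable def qs : Fin 6 → Fin 2 → ℂ
  | 0 => ![(Real.sqrt 2 : ℂ)⁻¹, (Real.sqrt 2 : ℂ)⁻¹]
  | 1 => ![(Real.sqrt 2 : ℂ)⁻¹, -(Real.sqrt 2 : ℂ)⁻¹]
  | 2 => ![(Real.sqrt 2 : ℂ)⁻¹, Complex.I * (Real.sqrt 2 : ℂ)⁻¹]
  | 3 => ![(Real.sqrt 2 : ℂ)⁻¹, -(Complex.I * (Real.sqrt 2 : ℂ)⁻¹)]
  | 4 => ![1, 0]
  | 5 => ![0, 1]

/-- The product state `⊗_i |f i⟩ ∈ (ℂ²)^{⊗N}`; as `f` ranges over `Fin N → Fin 6`,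
these are exactly the `6^N` elements of `S`. -/
noncomputable def prodState {N : ℕ} (f : Fin N → Fin 6) : (Fin N → Fin 2) → ℂ :=
  fun x => ∏ i, qs (f i) (x i)


/-- Single-qubit density matrices indexing `S^+`: for `k < 6` the pure projector
`|v_k⟩⟨v_k|`, and for `k = 6` the maximally mixed state `I₂/2`. -/
noncomputable def qsDM (k : Fin 7) : Matrix (Fin 2) (Fin 2) ℂ :=
  if h : (k : ℕ) < 6 then Matrix.of fun a b => qs ⟨k, h⟩ a * conj (qs ⟨k, h⟩ b)
  else (2 : ℂ)⁻¹ • 1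

/-- The element `ρ = ⊗_i qsDM (g i)` of `S^+` determined by `g : Fin N → Fin 7`. -/
noncomputable def sPlusState {N : ℕ} (g : Fin N → Fin 7) :
    Matrix (Fin N → Fin 2) (Fin N → Fin 2) ℂ :=
  Matrix.of fun x y => ∏ i, qsDM (g i) (x i) (y i)

/-- `n(ρ)`: the number of tensor factors of `ρ ∈ S^+` equal to `I₂/2`. -/
def nMix {N : ℕ} (g : Fin N → Fin 7) : ℕ :=
  (Finset.univ.filter fun i => g i = 6).card

/-- `S_ρ`: the product states in `S` that agree with `ρ ∈ S^+` on every qubit where `ρ`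
is pure. -/
def Srho {N : ℕ} (g : Fin N → Fin 7) : Finset (Fin N → Fin 6) :=
  Finset.univ.filter fun f => ∀ i, g i ≠ 6 → (g i : ℕ) = (f i : ℕ)

/-!
The six states form a qubit 2-design: for `α, β ∈ ℂ²`,
`∑ₖ |⟨vₖ|α⟩|² |⟨vₖ|β⟩|² = ‖α‖²‖β‖² + |⟨α|β⟩|² ≤ 2 ‖α‖²‖β‖²`.
Peeling off one qubit at a time (a pure factor of `ρ` just contracts `u` and `v` against its
fixed state, a mixed one contributes the 2-design factor) gives
`∑_{ψ ∈ S_ρ} |⟨u|ψ⟩|² |⟨v|ψ⟩|² ≤ 8^{n(ρ)} ⟨u|ρ|u⟩ ⟨v|ρ|v⟩`.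
For `u = v = |j⟩`, Cauchy–Schwarz and Parseval give `∑ⱼ ⟨j|ρ|j⟩² ≤ tr ρ² = 2^{-n(ρ)}`,
so the total is at most `4^{n(ρ)}`, while `|S_ρ| = 6^{n(ρ)}`.
-/

open Finset

theorem Fintype.sum_pi_fin_succ {β M : Type*} [Fintype β] [AddCommMonoid M] {n : ℕ}
    (F : (Fin (n + 1) → β) → M) : ∑ x, F x = ∑ a, ∑ x, F (Fin.cons a x) := by
  rw [← (Fin.consEquiv fun _ => β).sum_comp, Fintype.sum_prod_type]
  rfl

section OrthonormalFamily

variable {ι : Type*} [Fintype ι]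

lemma sq_norm_star_dotProduct_le {u : ι → ℂ} (hu : star u ⬝ᵥ u = 1) (w : ι → ℂ) :
    ‖star u ⬝ᵥ w‖ ^ 2 ≤ ∑ i, ‖w i‖ ^ 2 := by
  have hu' : ‖WithLp.toLp 2 u‖ = 1 := by
    refine (pow_eq_one_iff_of_nonneg (norm_nonneg _) two_ne_zero).mp ?_
    rw [← inner_self_eq_norm_sq (𝕜 := ℂ), EuclideanSpace.inner_toLp_toLp, dotProduct_comm, hu,
      RCLike.one_re]
  calc ‖star u ⬝ᵥ w‖ ^ 2 = ‖inner ℂ (WithLp.toLp 2 u) (WithLp.toLp 2 w)‖ ^ 2 := by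
        rw [EuclideanSpace.inner_toLp_toLp, dotProduct_comm]
    _ ≤ (‖WithLp.toLp 2 u‖ * ‖WithLp.toLp 2 w‖) ^ 2 := by gcongr; exact norm_inner_le_norm _ _
    _ = ∑ i, ‖w i‖ ^ 2 := by rw [hu', one_mul, EuclideanSpace.norm_sq_eq]

variable [DecidableEq ι] {b : ι → ι → ℂ}

lemma sum_conj_mul_eq_of_orthonormal
    (hb : ∀ j k, star (b j) ⬝ᵥ b k = if j = k then 1 else 0) (x y : ι) :
    ∑ j, conj (b j x) * b j y = if x = y then 1 else 0 := by
  have hU : Matrix.of b * (Matrix.of b)ᴴ = 1 := by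
    ext j k
    have := congrArg star (hb j k)
    simp only [dotProduct, star_sum, star_mul', star_star, Pi.star_apply] at this
    simpa [Matrix.mul_apply, Matrix.one_apply, apply_ite star, mul_comm] using this
  have := congrArg (fun M => M x y) (mul_eq_one_comm.mp hU)
  simpa [Matrix.mul_apply, Matrix.one_apply] using this

lemma sum_sq_norm_dotProduct_of_orthonormal
    (hb : ∀ j k, star (b j) ⬝ᵥ b k = if j = k then 1 else 0) (r : ι → ℂ) :
    ∑ j, ‖r ⬝ᵥ b j‖ ^ 2 = ∑ x, ‖r x‖ ^ 2 := by
  have key : ∑ j, conj (r ⬝ᵥ b j) * (r ⬝ᵥ b j) = ∑ x, conj (r x) * r x :=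
    calc ∑ j, conj (r ⬝ᵥ b j) * (r ⬝ᵥ b j)
        = ∑ j, ∑ x, ∑ y, conj (r x) * r y * (conj (b j x) * b j y) := by
          simp only [dotProduct, map_sum, map_mul, sum_mul_sum]
          exact sum_congr rfl fun j _ => sum_congr rfl fun x _ => sum_congr rfl fun y _ => by ring
      _ = ∑ x, ∑ y, conj (r x) * r y * ∑ j, conj (b j x) * b j y := by
          rw [sum_comm]
          simp only [mul_sum]
          exact sum_congr rfl fun x _ => sum_comm
      _ = ∑ x, conj (r x) * r x := by
          simp [sum_conj_mul_eq_of_orthonormal hb]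
  simp only [Complex.conj_mul'] at key
  exact_mod_cast key

theorem sum_sq_re_star_dotProduct_mulVec_le
    (hb : ∀ j k, star (b j) ⬝ᵥ b k = if j = k then 1 else 0) (M : Matrix ι ι ℂ) :
    ∑ j, (star (b j) ⬝ᵥ (M *ᵥ b j)).re ^ 2 ≤ ∑ x, ∑ y, ‖M x y‖ ^ 2 :=
  calc ∑ j, (star (b j) ⬝ᵥ (M *ᵥ b j)).re ^ 2
      ≤ ∑ j, ∑ x, ‖M x ⬝ᵥ b j‖ ^ 2 := by
        gcongr with j
        calc _ ≤ ‖star (b j) ⬝ᵥ (M *ᵥ b j)‖ ^ 2 := by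
              rw [← sq_abs]; gcongr; exact Complex.abs_re_le_norm _
          _ ≤ _ := sq_norm_star_dotProduct_le (by simpa using hb j j) (M *ᵥ b j)
    _ = ∑ x, ∑ y, ‖M x y‖ ^ 2 := by
        rw [sum_comm]
        exact sum_congr rfl fun x _ => sum_sq_norm_dotProduct_of_orthonormal hb (M x)

end OrthonormalFamily

lemma qs_two_design (α β : Fin 2 → ℂ) :
    ∑ k, ‖∑ a, qs k a * α a‖ ^ 2 * ‖∑ a, qs k a * β a‖ ^ 2 + ‖α 0 * β 1 - α 1 * β 0‖ ^ 2 =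
      2 * (∑ a, ‖α a‖ ^ 2) * ∑ a, ‖β a‖ ^ 2 := by
  have h4 : Real.sqrt 2 ^ 4 = 4 := by
    rw [show 4 = 2 * 2 by rfl, pow_mul, Real.sq_sqrt zero_le_two]; norm_num
  simp only [Fin.sum_univ_six, Fin.sum_univ_two, qs, Complex.sq_norm, Complex.normSq_apply]
  simp only [Matrix.cons_val_zero, Matrix.cons_val_one, Matrix.cons_val_fin_one, Complex.add_re,
    Complex.add_im, Complex.sub_re, Complex.sub_im, Complex.mul_re, Complex.mul_im,
    Complex.neg_re, Complex.neg_im, Complex.inv_re, Complex.inv_im, Complex.ofReal_re,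
    Complex.ofReal_im, Complex.I_re, Complex.I_im, Complex.normSq_ofReal, Real.mul_self_sqrt,
    Nat.ofNat_nonneg, neg_zero, zero_div, zero_mul, mul_zero, sub_zero, add_zero, zero_add,
    sub_self, zero_sub, one_mul, neg_mul, neg_neg]
  field_simp
  ring_nf
  rw [h4]
  ring

lemma sum_qs_sq_norm_mul_sq_norm_le (α β : Fin 2 → ℂ) :
    ∑ k, ‖∑ a, qs k a * α a‖ ^ 2 * ‖∑ a, qs k a * β a‖ ^ 2 ≤
      2 * (∑ a, ‖α a‖ ^ 2) * ∑ a, ‖β a‖ ^ 2 := by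
  rw [← qs_two_design]
  exact le_add_of_nonneg_right (by positivity)

lemma sum_sq_norm_qs (k : Fin 6) : ∑ a, ‖qs k a‖ ^ 2 = 1 := by
  have h2 : Real.sqrt 2 ^ 2 = 2 := Real.sq_sqrt zero_le_two
  fin_cases k <;> norm_num [qs, Fin.sum_univ_two, h2]

lemma qsDM_six (a b : Fin 2) : qsDM 6 a b = if a = b then 2⁻¹ else 0 := by
  simp [qsDM, Matrix.one_apply]

lemma qsDM_castSucc (k : Fin 6) (a b : Fin 2) :
    qsDM k.castSucc a b = qs k a * star (qs k b) := by
  simp [qsDM]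

lemma sum_sum_sq_norm_qsDM (c : Fin 7) :
    ∑ a, ∑ b, ‖qsDM c a b‖ ^ 2 = if c = 6 then 2⁻¹ else 1 := by
  cases c using Fin.lastCases with
  | last => norm_num [show Fin.last 6 = 6 from rfl, qsDM_six, Fin.sum_univ_two]
  | cast k =>
    simp only [qsDM_castSucc, norm_mul, norm_star, mul_pow, ← mul_sum, ← sum_mul, sum_sq_norm_qs]
    simp [Fin.ext_iff, k.isLt.ne]

section TensorStructure

variable {N : ℕ}

theorem sPlus_induction {motive : ∀ {N : ℕ}, (Fin N → Fin 7) → Prop} (nil : motive Fin.elim0)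
    (mixed : ∀ {N} (g : Fin N → Fin 7), motive g → motive (Fin.cons 6 g))
    (pure : ∀ {N} (k : Fin 6) (g : Fin N → Fin 7), motive g → motive (Fin.cons k.castSucc g))
    (g : Fin N → Fin 7) : motive g :=
  Fin.consInduction nil (fun c g h => Fin.lastCases (mixed g h) (fun k => pure k g h) c) g

lemma nMix_elim0 : nMix Fin.elim0 = 0 := rfl

lemma nMix_cons_six (g : Fin N → Fin 7) : nMix (Fin.cons 6 g) = nMix g + 1 := by
  rw [nMix, nMix, card_filter, card_filter, Fin.sum_univ_succ]
  simp [add_comm]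

lemma nMix_cons_castSucc (k : Fin 6) (g : Fin N → Fin 7) :
    nMix (Fin.cons k.castSucc g) = nMix g := by
  rw [nMix, nMix, card_filter, card_filter, Fin.sum_univ_succ]
  simp [Fin.ext_iff, k.isLt.ne]

lemma Srho_elim0 : Srho Fin.elim0 = univ := by
  simp [Srho]

lemma sum_Srho_cons {M : Type*} [AddCommMonoid M] (c : Fin 7) (g : Fin N → Fin 7)
    (F : (Fin (N + 1) → Fin 6) → M) :
    ∑ f ∈ Srho (Fin.cons c g), F f =
      ∑ k ∈ univ.filter (fun k : Fin 6 => c ≠ 6 → (c : ℕ) = k), ∑ f ∈ Srho g, F (Fin.cons k f) := by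
  simp only [Srho, sum_filter, Fintype.sum_pi_fin_succ (fun f => if _ then F f else 0),
    Fin.forall_fin_succ, Fin.cons_zero, Fin.cons_succ, ite_and, sum_ite_irrel, sum_const_zero]

lemma sum_Srho_cons_six {M : Type*} [AddCommMonoid M] (g : Fin N → Fin 7)
    (F : (Fin (N + 1) → Fin 6) → M) :
    ∑ f ∈ Srho (Fin.cons 6 g), F f = ∑ k, ∑ f ∈ Srho g, F (Fin.cons k f) := by
  simp [sum_Srho_cons]

lemma sum_Srho_cons_castSucc {M : Type*} [AddCommMonoid M] (k : Fin 6) (g : Fin N → Fin 7)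
    (F : (Fin (N + 1) → Fin 6) → M) :
    ∑ f ∈ Srho (Fin.cons k.castSucc g), F f = ∑ f ∈ Srho g, F (Fin.cons k f) := by
  have : univ.filter (fun l : Fin 6 => k.castSucc ≠ 6 → (k.castSucc : ℕ) = l) = {k} := by
    ext l
    simp [Fin.ext_iff, k.isLt.ne, eq_comm]
  rw [sum_Srho_cons, this, sum_singleton]

theorem card_Srho (g : Fin N → Fin 7) : #(Srho g) = 6 ^ nMix g := by
  induction g using sPlus_induction with
  | nil => simp [Srho_elim0, nMix_elim0]
  | mixed g ih =>
    rw [card_eq_sum_ones, sum_Srho_cons_six, ← card_eq_sum_ones, ih, nMix_cons_six]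
    simp [pow_succ, mul_comm]
  | pure k g ih =>
    rw [card_eq_sum_ones, sum_Srho_cons_castSucc, ← card_eq_sum_ones, ih, nMix_cons_castSucc]

lemma prodState_cons (k : Fin 6) (f : Fin N → Fin 6) (a : Fin 2) (x : Fin N → Fin 2) :
    prodState (Fin.cons k f) (Fin.cons a x) = qs k a * prodState f x := by
  simp [prodState, Fin.prod_univ_succ]

lemma sPlusState_cons (c : Fin 7) (g : Fin N → Fin 7) (a b : Fin 2) (x y : Fin N → Fin 2) :
    sPlusState (Fin.cons c g) (Fin.cons a x) (Fin.cons b y) = qsDM c a b * sPlusState g x y := by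
  simp [sPlusState, Fin.prod_univ_succ]

lemma star_dotProduct_prodState_cons (u : (Fin (N + 1) → Fin 2) → ℂ) (k : Fin 6)
    (f : Fin N → Fin 6) :
    star u ⬝ᵥ prodState (Fin.cons k f) =
      ∑ a, qs k a * (star (fun x => u (Fin.cons a x)) ⬝ᵥ prodState f) := by
  simp only [dotProduct, Fintype.sum_pi_fin_succ, prodState_cons, mul_sum, Pi.star_apply]
  exact sum_congr rfl fun a _ => sum_congr rfl fun x _ => by ring

lemma star_dotProduct_sPlusState_mulVec_cons (u : (Fin (N + 1) → Fin 2) → ℂ) (c : Fin 7)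
    (g : Fin N → Fin 7) :
    star u ⬝ᵥ (sPlusState (Fin.cons c g) *ᵥ u) =
      ∑ a, ∑ b, qsDM c a b *
        (star (fun x => u (Fin.cons a x)) ⬝ᵥ (sPlusState g *ᵥ fun y => u (Fin.cons b y))) := by
  simp only [dotProduct, Matrix.mulVec, Fintype.sum_pi_fin_succ, sPlusState_cons, mul_sum,
    Pi.star_apply]
  refine sum_congr rfl fun a _ => ?_
  rw [sum_comm]
  exact sum_congr rfl fun b _ => sum_congr rfl fun x _ => sum_congr rfl fun y _ => by ring

lemma re_star_dotProduct_sPlusState_mulVec_cons_six (u : (Fin (N + 1) → Fin 2) → ℂ)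
    (g : Fin N → Fin 7) :
    (star u ⬝ᵥ (sPlusState (Fin.cons 6 g) *ᵥ u)).re =
      2⁻¹ * ∑ a, (star (fun x => u (Fin.cons a x)) ⬝ᵥ
        (sPlusState g *ᵥ fun y => u (Fin.cons a y))).re := by
  simp [star_dotProduct_sPlusState_mulVec_cons, qsDM_six, Fin.sum_univ_two, mul_add]

/-- `(⟨q| ⊗ 1) u`: the first qubit of `u` contracted against `q`. -/
noncomputable def contractHead (q : Fin 2 → ℂ) (u : (Fin (N + 1) → Fin 2) → ℂ) :
    (Fin N → Fin 2) → ℂ :=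
  ∑ a, star (q a) • fun x => u (Fin.cons a x)

lemma star_dotProduct_prodState_cons_eq_contractHead (u : (Fin (N + 1) → Fin 2) → ℂ)
    (k : Fin 6) (f : Fin N → Fin 6) :
    star u ⬝ᵥ prodState (Fin.cons k f) = star (contractHead (qs k) u) ⬝ᵥ prodState f := by
  simp [star_dotProduct_prodState_cons, contractHead, smul_dotProduct]

lemma star_dotProduct_sPlusState_mulVec_cons_castSucc (u : (Fin (N + 1) → Fin 2) → ℂ)
    (k : Fin 6) (g : Fin N → Fin 7) :
    star u ⬝ᵥ (sPlusState (Fin.cons k.castSucc g) *ᵥ u) =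
      star (contractHead (qs k) u) ⬝ᵥ (sPlusState g *ᵥ contractHead (qs k) u) := by
  simp only [star_dotProduct_sPlusState_mulVec_cons, qsDM_castSucc, contractHead,
    Fin.sum_univ_two, star_add, star_smul, star_star, Matrix.mulVec_add, Matrix.mulVec_smul,
    add_dotProduct, dotProduct_add, smul_dotProduct, dotProduct_smul, smul_eq_mul]
  ring

end TensorStructure

theorem sum_sum_sq_norm_sPlusState {N : ℕ} (g : Fin N → Fin 7) :
    ∑ x, ∑ y, ‖sPlusState g x y‖ ^ 2 = 2⁻¹ ^ nMix g := by
  set F := fun i a b => ‖qsDM (g i) a b‖ ^ 2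
  calc ∑ x, ∑ y, ‖sPlusState g x y‖ ^ 2
      = ∑ x : Fin N → Fin 2, ∑ y : Fin N → Fin 2, ∏ i, F i (x i) (y i) := by
        simp only [sPlusState, Matrix.of_apply, norm_prod, ← prod_pow, F]
    _ = ∏ i, ∑ a, ∑ b, F i a b := by
        simp only [← Fintype.prod_sum]
        exact (Fintype.prod_sum fun i a => ∑ b, F i a b).symm
    _ = 2⁻¹ ^ nMix g := by
        simp only [F, sum_sum_sq_norm_qsDM, prod_ite, prod_const, one_pow, mul_one, nMix]

theorem sum_sq_norm_mul_sq_norm_le {N : ℕ} (g : Fin N → Fin 7) (u v : (Fin N → Fin 2) → ℂ) :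
    ∑ f ∈ Srho g, ‖star u ⬝ᵥ prodState f‖ ^ 2 * ‖star v ⬝ᵥ prodState f‖ ^ 2 ≤
      8 ^ nMix g * (star u ⬝ᵥ (sPlusState g *ᵥ u)).re * (star v ⬝ᵥ (sPlusState g *ᵥ v)).re := by
  induction g using sPlus_induction with
  | nil =>
    simp [Srho_elim0, nMix_elim0, prodState, sPlusState, dotProduct, Matrix.mulVec,
      Complex.sq_norm, Complex.normSq_apply]
  | mixed g ih =>
    set α := fun a f => star (fun x => u (Fin.cons a x)) ⬝ᵥ prodState f
    set β := fun a f => star (fun x => v (Fin.cons a x)) ⬝ᵥ prodState f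
    calc ∑ f ∈ Srho (Fin.cons 6 g), ‖star u ⬝ᵥ prodState f‖ ^ 2 * ‖star v ⬝ᵥ prodState f‖ ^ 2
        = ∑ f ∈ Srho g, ∑ k, ‖∑ a, qs k a * α a f‖ ^ 2 * ‖∑ a, qs k a * β a f‖ ^ 2 := by
          simp only [sum_Srho_cons_six, star_dotProduct_prodState_cons]
          exact sum_comm
      _ ≤ ∑ f ∈ Srho g, 2 * (∑ a, ‖α a f‖ ^ 2) * ∑ c, ‖β c f‖ ^ 2 :=
          sum_le_sum fun f _ => sum_qs_sq_norm_mul_sq_norm_le _ _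
      _ = 2 * ∑ a, ∑ c, ∑ f ∈ Srho g, ‖α a f‖ ^ 2 * ‖β c f‖ ^ 2 := by
          simp_rw [mul_assoc, sum_mul_sum]
          rw [← mul_sum, sum_comm]
          exact congrArg _ (sum_congr rfl fun a _ => sum_comm)
      _ ≤ 2 * ∑ a, ∑ c, 8 ^ nMix g *
            (star (fun x => u (Fin.cons a x)) ⬝ᵥ (sPlusState g *ᵥ fun y => u (Fin.cons a y))).re *
            (star (fun x => v (Fin.cons c x)) ⬝ᵥ
              (sPlusState g *ᵥ fun y => v (Fin.cons c y))).re := by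
          gcongr with a _ c _
          exact ih _ _
      _ = _ := by
          simp only [re_star_dotProduct_sPlusState_mulVec_cons_six, nMix_cons_six, Fin.sum_univ_two]
          ring
  | pure k g ih =>
    simpa only [sum_Srho_cons_castSucc, star_dotProduct_prodState_cons_eq_contractHead,
      star_dotProduct_sPlusState_mulVec_cons_castSucc, nMix_cons_castSucc] using ih _ _

/-- For any `ρ ∈ S^+` and any orthonormal basis `{|j⟩}` of `(ℂ²)^{⊗N}`, the average over
the states `|ψ⟩ ∈ S_ρ` of `Σ_j |⟨j|ψ⟩|⁴` is at most `(2/3)^{n(ρ)}`. -/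
theorem average_inverse_effective_dimension_over_Srho_le (N : ℕ) (g : Fin N → Fin 7)
    (b : (Fin N → Fin 2) → ((Fin N → Fin 2) → ℂ))
    (hb : ∀ j k, star (b j) ⬝ᵥ b k = if j = k then 1 else 0) :
    ((Srho g).card : ℝ)⁻¹ *
        ∑ f ∈ Srho g, ∑ j : Fin N → Fin 2, ‖star (b j) ⬝ᵥ prodState f‖ ^ 4
      ≤ (2 / 3 : ℝ) ^ nMix g := by
  have hsum : ∑ f ∈ Srho g, ∑ j, ‖star (b j) ⬝ᵥ prodState f‖ ^ 4 ≤ 4 ^ nMix g :=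
    calc ∑ f ∈ Srho g, ∑ j, ‖star (b j) ⬝ᵥ prodState f‖ ^ 4
        = ∑ j, ∑ f ∈ Srho g, ‖star (b j) ⬝ᵥ prodState f‖ ^ 2 * ‖star (b j) ⬝ᵥ prodState f‖ ^ 2 := by
          rw [sum_comm]
          simp only [← pow_add]
      _ ≤ ∑ j, 8 ^ nMix g * (star (b j) ⬝ᵥ (sPlusState g *ᵥ b j)).re ^ 2 := by
          gcongr with j
          simpa only [mul_assoc, ← sq] using sum_sq_norm_mul_sq_norm_le g (b j) (b j)
      _ ≤ 8 ^ nMix g * ∑ x, ∑ y, ‖sPlusState g x y‖ ^ 2 := by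
          rw [← mul_sum]
          exact mul_le_mul_of_nonneg_left (sum_sq_re_star_dotProduct_mulVec_le hb _) (by positivity)
      _ = 4 ^ nMix g := by
          rw [sum_sum_sq_norm_sPlusState, ← mul_pow]
          norm_num
  rw [card_Srho, Nat.cast_pow, Nat.cast_ofNat]
  calc (6 ^ nMix g : ℝ)⁻¹ * ∑ f ∈ Srho g, ∑ j, ‖star (b j) ⬝ᵥ prodState f‖ ^ 4
      ≤ (6 ^ nMix g)⁻¹ * 4 ^ nMix g := by gcongr
    _ = (2 / 3) ^ nMix g := by rw [← div_eq_inv_mul, ← div_pow]; norm_num
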